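/- arXiv:2405.02597 — 5 statements merged into one kernel-verified Lean document; each statement's English description precedes it below -/
import Mathlib

section
/- Let p and q be coprime integers with p > q ≥ 1 and p + q odd. Then there exist n ≥ 1 and integers α_1, …, α_n such that every α_i is even, |α_i| ≥ 2 for all i, α_1 ≥ 2, the denominator q_n of the negative continued fraction [α_1, …, α_n] is nonzero, and p/q = p_n/q_n (i.e. p/q = [α_1, …, α_n]). Moreover, if q > 1 then n ≥ 2. -/
/-!
Run the nearest-even-integer algorithm: for `a/b` with `1 < |b| < |a|` pick an even `c` with
`|c b - a| ≤ |b|`. Coprimality rules out `c b - a ∈ {0, ±b}`, so `r = c b - a` satisfies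
`0 < |r| < |b|`, the pair `(b, r)` is again coprime with `b + r` odd, and `a/b = c - 1/(b/r)`.
The denominators strictly decrease, and the algorithm stops at `|b| = 1`, where parity forces
`a` to be even.
-/

/-- Convergent numerators of the negative continued fraction `[α 1, …, α n]`:
`p 0 = 1`, `p 1 = α 1`, `p i = α i * p (i-1) - p (i-2)`. -/
def ncfP (α : ℕ → ℤ) : ℕ → ℤ
  | 0 => 1
  | 1 => α 1
  | (i+2) => α (i+2) * ncfP α (i+1) - ncfP α i

/-- Convergent denominators of the negative continued fraction `[α 1, …, α n]`:
`q 0 = 0`, `q 1 = 1`, `q i = α i * q (i-1) - q (i-2)`. -/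
def ncfQ (α : ℕ → ℤ) : ℕ → ℤ
  | 0 => 0
  | 1 => 1
  | (i+2) => α (i+2) * ncfQ α (i+1) - ncfQ α i

/-- The sequence `[c, β 1, β 2, …]`. -/
def ncfCons (c : ℤ) (β : ℕ → ℤ) : ℕ → ℤ := fun i => if i = 1 then c else β (i - 1)

lemma ncfP_ncfCons_and_ncfQ_ncfCons (c : ℤ) (β : ℕ → ℤ) :
    ∀ m, ncfP (ncfCons c β) (m + 1) = c * ncfP β m - ncfQ β m ∧
      ncfQ (ncfCons c β) (m + 1) = ncfP β m
  | 0 => by simp [ncfP, ncfQ, ncfCons]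
  | 1 => by simp [ncfP, ncfQ, ncfCons]; ring
  | m + 2 => by
    obtain ⟨hP, hQ⟩ := ncfP_ncfCons_and_ncfQ_ncfCons c β m
    obtain ⟨hP', hQ'⟩ := ncfP_ncfCons_and_ncfQ_ncfCons c β (m + 1)
    have hcons : ncfCons c β (m + 3) = β (m + 2) := by simp [ncfCons]
    constructor
    · change ncfCons c β (m + 3) * ncfP (ncfCons c β) (m + 1 + 1) - ncfP (ncfCons c β) (m + 1)
        = c * (β (m + 2) * ncfP β (m + 1) - ncfP β m) - (β (m + 2) * ncfQ β (m + 1) - ncfQ β m)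
      rw [hcons, hP, hP']
      ring
    · change ncfCons c β (m + 3) * ncfQ (ncfCons c β) (m + 1 + 1) - ncfQ (ncfCons c β) (m + 1)
        = β (m + 2) * ncfP β (m + 1) - ncfP β m
      rw [hcons, hQ, hQ']

lemma forall_ncfCons {R : ℤ → Prop} {c : ℤ} {β : ℕ → ℤ} {m : ℕ} (hc : R c)
    (hβ : ∀ i, 1 ≤ i → i ≤ m → R (β i)) :
    ∀ i, 1 ≤ i → i ≤ m + 1 → R (ncfCons c β i) := by
  intro i hi1 him
  by_cases h : i = 1
  · simpa [ncfCons, h] using hc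
  · simpa [ncfCons, h] using hβ (i - 1) (by omega) (by omega)

/-- `[α 1, …, α n] = a / b`, cross-multiplied. -/
def NCFRepresents (α : ℕ → ℤ) (n : ℕ) (a b : ℤ) : Prop :=
  ncfQ α n ≠ 0 ∧ ncfP α n * b = a * ncfQ α n

lemma NCFRepresents.ncfCons {β : ℕ → ℤ} {m : ℕ} {b r : ℤ} (h : NCFRepresents β m b r)
    (hb : b ≠ 0) (c : ℤ) : NCFRepresents (ncfCons c β) (m + 1) (c * b - r) b := by
  obtain ⟨hQ, hPQ⟩ := h
  obtain ⟨hP', hQ'⟩ := ncfP_ncfCons_and_ncfQ_ncfCons c β m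
  refine ⟨?_, ?_⟩
  · rw [hQ']
    rintro hP
    exact mul_ne_zero hb hQ (by rw [← hPQ, hP, zero_mul])
  · rw [hP', hQ']
    linear_combination hPQ

lemma ncfRepresents_one (a b : ℤ) (hb : b * b = 1) : NCFRepresents (fun _ => a * b) 1 a b :=
  ⟨by simp [ncfQ], by simp only [ncfP, ncfQ]; linear_combination a * hb⟩

lemma exists_even_abs_mul_sub_le (a b : ℤ) (hb : b ≠ 0) : ∃ c, Even c ∧ |c * b - a| ≤ |b| := by
  wlog hpos : 0 < b generalizing a b
  · obtain ⟨c, hc, h⟩ := this (-a) (-b) (neg_ne_zero.mpr hb) (by omega)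
    refine ⟨c, hc, ?_⟩
    rwa [abs_neg, show c * -b - -a = -(c * b - a) by ring, abs_neg] at h
  set k := (a + b) / (2 * b)
  have hdiv : 2 * b * k + (a + b) % (2 * b) = a + b := Int.mul_ediv_add_emod (a + b) (2 * b)
  have hnonneg := Int.emod_nonneg (a + b) (by omega : 2 * b ≠ 0)
  have hlt := Int.emod_lt_of_pos (a + b) (by omega : 0 < 2 * b)
  refine ⟨2 * k, even_two_mul k, ?_⟩
  rw [abs_of_pos hpos, abs_le]
  constructor <;> linarith

lemma two_le_abs_of_even {c : ℤ} (hc : Even c) (hc0 : c ≠ 0) : 2 ≤ |c| := by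
  obtain ⟨k, rfl⟩ := hc
  rcases abs_cases (k + k) with ⟨h, _⟩ | ⟨h, _⟩ <;> omega

lemma exists_even_ncf_step (a b : ℤ) (hcop : IsCoprime a b) (hb1 : 1 < |b|) (hba : |b| < |a|)
    (hodd : Odd (a + b)) :
    ∃ c r, Even c ∧ c ≠ 0 ∧ (0 < a * b → 0 < c) ∧ c * b - r = a ∧
      r ≠ 0 ∧ |r| < |b| ∧ IsCoprime b r ∧ Odd (b + r) := by
  have hb : b ≠ 0 := abs_pos.mp (one_pos.trans hb1)
  have hndvd : ¬ b ∣ a := fun h =>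
    hb1.ne' (Int.isUnit_iff_abs_eq.mp (hcop.isUnit_of_dvd' h dvd_rfl))
  obtain ⟨c, hc, hcr⟩ := exists_even_abs_mul_sub_le a b hb
  set r := c * b - a with hr
  have hrb : |r| < |b| := hcr.lt_of_ne fun h => by
    rcases abs_eq_abs.mp h with h | h
    · exact hndvd ⟨c - 1, by linarith⟩
    · exact hndvd ⟨c + 1, by linarith⟩
  have hc0 : c ≠ 0 := by rintro rfl; simp [hr] at hrb; linarith
  refine ⟨c, r, hc, hc0, fun hab => ?_, by ring, fun h => hndvd ⟨c, by linarith⟩, hrb, ?_, ?_⟩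
  · have hrab : |r * b| < a * b := calc
      |r * b| = |r| * |b| := abs_mul r b
      _ < |a| * |b| := by gcongr; exact hrb.trans hba
      _ = a * b := by rw [← abs_mul, abs_of_pos hab]
    have hcbb : 0 < c * (b * b) := by
      have : c * (b * b) = a * b + r * b := by ring
      linarith [neg_abs_le (r * b)]
    exact pos_of_mul_pos_left hcbb (mul_self_nonneg b)
  · simpa [hr, sub_eq_neg_add, mul_comm] using hcop.symm.neg_right.add_mul_left_right c
  · have : b + r = a + b + (c * b - 2 * a) := by ring
    exact this ▸ hodd.add_even ((hc.mul_right b).sub (even_two_mul a))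

theorem exists_even_ncfRepresents (a b : ℤ) (hcop : IsCoprime a b) (hb : b ≠ 0)
    (hba : |b| < |a|) (hodd : Odd (a + b)) :
    ∃ (n : ℕ) (α : ℕ → ℤ), 1 ≤ n ∧
      (∀ i, 1 ≤ i → i ≤ n → Even (α i) ∧ 2 ≤ |α i|) ∧
      (0 < a * b → 2 ≤ α 1) ∧ NCFRepresents α n a b ∧ (1 < |b| → 2 ≤ n) := by
  induction hk : b.natAbs using Nat.strong_induction_on generalizing a b with
  | _ k ih =>
  subst hk
  rcases (Int.one_le_abs hb).eq_or_lt with hb1 | hb1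
  · have hb' : b = 1 ∨ b = -1 := (abs_eq zero_le_one).mp hb1.symm
    have hb2 : b * b = 1 := by rcases hb' with rfl | rfl <;> norm_num
    have ha : Even a := by
      rw [Int.odd_iff] at hodd
      rw [Int.even_iff]
      omega
    have hab : Even (a * b) := ha.mul_right b
    have hab0 : a * b ≠ 0 := mul_ne_zero (by rintro rfl; simp at hba; omega) hb
    refine ⟨1, fun _ => a * b, le_rfl, fun _ _ _ => ⟨hab, two_le_abs_of_even hab hab0⟩,
      fun h => by simpa [abs_of_pos h] using two_le_abs_of_even hab hab0,
      ncfRepresents_one a b hb2, by omega⟩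
  · obtain ⟨c, r, hc, hc0, hcpos, rfl, hr0, hrb, hcop', hodd'⟩ :=
      exists_even_ncf_step a b hcop hb1 hba hodd
    obtain ⟨m, β, hm, hβ, -, hrep, -⟩ :=
      ih r.natAbs (by zify; simpa using hrb) b r hcop' hr0 hrb hodd' rfl
    refine ⟨m + 1, ncfCons c β, by omega,
      forall_ncfCons (R := fun x => Even x ∧ 2 ≤ |x|) ⟨hc, two_le_abs_of_even hc hc0⟩ hβ,
      fun hab => ?_, hrep.ncfCons hb c, fun _ => by omega⟩
    simpa [ncfCons, abs_of_pos (hcpos hab)] using two_le_abs_of_even hc hc0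

/-- any coprime pair `p > q ≥ 1` with `p + q` odd admits a negative
continued fraction expansion `p/q = [α 1, …, α n]` with all `α i` even, `|α i| ≥ 2`,
`α 1 ≥ 2`; moreover `n ≥ 2` if `q > 1`. -/
theorem stmt0 (p q : ℤ) (hcop : IsCoprime p q) (hpq : q < p) (hq : 1 ≤ q)
    (hodd : Odd (p + q)) :
    ∃ (n : ℕ) (α : ℕ → ℤ), 1 ≤ n ∧
      (∀ i, 1 ≤ i → i ≤ n → Even (α i) ∧ 2 ≤ |α i|) ∧
      2 ≤ α 1 ∧
      ncfQ α n ≠ 0 ∧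
      (p : ℚ) / (q : ℚ) = (ncfP α n : ℚ) / (ncfQ α n : ℚ) ∧
      (1 < q → 2 ≤ n) := by
  have hq0 : q ≠ 0 := by omega
  obtain ⟨n, α, hn, hα, hα1, ⟨hQ, hPQ⟩, hn2⟩ := exists_even_ncfRepresents p q hcop hq0
    (by rw [abs_of_pos (by omega), abs_of_pos (by omega)]; exact hpq) hodd
  refine ⟨n, α, hn, hα, hα1 (mul_pos (by omega) (by omega)), hQ, ?_,
    fun h => hn2 (by rwa [abs_of_pos (by omega)])⟩
  rw [div_eq_div_iff (by exact_mod_cast hq0) (by exact_mod_cast hQ)]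
  exact_mod_cast hPQ.symm
end

section
/- Let p and q be coprime integers with p even, q odd and p > q > 0, and suppose p/q = [α_1, …, α_n] is a negative continued fraction expansion (i.e. q_n ≠ 0 and p/q = p_n/q_n) in which every α_i is even and |α_i| ≥ 2. Then n is odd. -/
/-!
With all partial quotients even, the recurrence reduces modulo 2 to `p_i ≡ p_{i-2}`, so starting
from `p_0 = 1`, `p_1 = α_1 ≡ 0` the numerator `p_n` is even exactly when `n` is odd. On the other
hand `p/q = p_n/q_n` gives `p q_n = p_n q`, and with `p` even and `q` odd this forces `p_n` even.
-/

theorem even_ncfP_iff_odd {α : ℕ → ℤ} :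
    ∀ {n : ℕ}, (∀ i, 1 ≤ i → i ≤ n → Even (α i)) → (Even (ncfP α n) ↔ Odd n)
  | 0, _ => by simp [ncfP]
  | 1, h => by simpa [ncfP] using h 1 le_rfl le_rfl
  | n + 2, h => by
    have ih := even_ncfP_iff_odd (n := n) fun i hi hin => h i hi (by omega)
    have hprod : Even (α (n + 2) * ncfP α (n + 1)) := (h (n + 2) (by omega) le_rfl).mul_right _
    rw [ncfP, Int.even_sub, iff_true_left hprod, ih, Nat.odd_add]
    simp

theorem even_of_intCast_div_eq_div {p q P Q : ℤ} (hp : Even p) (hq : Odd q) (hQ : Q ≠ 0)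
    (h : (p : ℚ) / q = P / Q) : Even P := by
  have hq0 : (q : ℚ) ≠ 0 := Int.cast_ne_zero.mpr (by rintro rfl; simp at hq)
  have hcross : p * Q = P * q := by exact_mod_cast (div_eq_div_iff hq0 (by exact_mod_cast hQ)).mp h
  have hPq : Even (P * q) := hcross ▸ hp.mul_right Q
  exact (Int.even_mul.mp hPq).resolve_right (Int.not_even_iff_odd.mpr hq)

theorem stmt6_general (p q : ℤ) (hp : Even p) (hq : Odd q)
    (n : ℕ) (α : ℕ → ℤ)
    (hα : ∀ i, 1 ≤ i → i ≤ n → Even (α i) ∧ 2 ≤ |α i|)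
    (hqn : ncfQ α n ≠ 0)
    (hval : (p : ℚ) / (q : ℚ) = (ncfP α n : ℚ) / (ncfQ α n : ℚ)) :
    Odd n :=
  (even_ncfP_iff_odd fun i hi hin => (hα i hi hin).1).mp
    (even_of_intCast_div_eq_div hp hq hqn hval)

/-- if `p` is even, `q` is odd, `p > q > 0` are coprime, and
`p/q = [α 1, …, α n]` is a negative continued fraction expansion with all `α i`
even and `|α i| ≥ 2`, then `n` is odd. -/
theorem stmt6 (p q : ℤ) (hcop : IsCoprime p q) (hp : Even p) (hq : Odd q)
    (h1 : q < p) (h2 : 0 < q) (n : ℕ) (α : ℕ → ℤ)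
    (hα : ∀ i, 1 ≤ i → i ≤ n → Even (α i) ∧ 2 ≤ |α i|)
    (hqn : ncfQ α n ≠ 0)
    (hval : (p : ℚ) / (q : ℚ) = (ncfP α n : ℚ) / (ncfQ α n : ℚ)) :
    Odd n :=
  stmt6_general p q hp hq n α hα hqn hval
end

section
/- Let d_1, …, d_n be real numbers such that all the tail values t_1, …, t_n are defined and nonzero. Then the chain matrix A(d_1,…,d_n) is congruent over ℝ to the diagonal matrix diag(t_1, …, t_n): there exists an invertible real n×n matrix P with Pᵀ·A(d_1,…,d_n)·P = diag(t_1, …, t_n). -/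
/-- Tail values of the negative continued fraction: `t n = d n` and
`t i = d i - 1 / t (i+1)` for `i < n`. -/
noncomputable def tailVal (d : ℕ → ℝ) (n : ℕ) (i : ℕ) : ℝ :=
  if h : n ≤ i then d n
  else d i - 1 / tailVal d n (i + 1)
termination_by n - i
decreasing_by omega

/-- The `n × n` chain (tridiagonal) matrix with diagonal entries
`d 1, …, d n` and off-diagonal entries `1`. -/
def chainMatrix (d : ℕ → ℝ) (n : ℕ) : Matrix (Fin n) (Fin n) ℝ :=
  Matrix.of fun i j =>
    if i = j then d (i.1 + 1)
    else if i.1 + 1 = j.1 ∨ j.1 + 1 = i.1 then 1 else 0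

/-!
The chain matrix factors as `A = U · diag(t₁, …, tₙ) · Uᵀ` with `U` unit upper bidiagonal,
its superdiagonal entries being `1 / t₂, …, 1 / tₙ`. Off the diagonal this is
`t_{k+1} / t_{k+1} = 1`; on the diagonal it reads `tᵢ + 1 / t_{i+1} = dᵢ` (and `tₙ = dₙ`),
which is exactly the recursion defining the tail values. Since `U` is invertible,
`P = (U⁻¹)ᵀ` gives `Pᵀ A P = diag(t₁, …, tₙ)`.
-/

open Matrix Finset

theorem Matrix.exists_isUnit_transpose_mul_mul_eq_of_eq_mul_mul_transpose {R ι : Type*}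
    [CommRing R] [Fintype ι] [DecidableEq ι] {A D U : Matrix ι ι R} (hU : IsUnit U)
    (hA : A = U * D * Uᵀ) : ∃ P : Matrix ι ι R, IsUnit P ∧ Pᵀ * A * P = D := by
  have hUdet : IsUnit U.det := (isUnit_iff_isUnit_det U).mp hU
  have hUtdet : IsUnit Uᵀ.det := (det_transpose U).symm ▸ hUdet
  refine ⟨U⁻¹ᵀ, (isUnit_transpose _).mpr (isUnit_nonsing_inv_iff.mpr hU), ?_⟩
  calc U⁻¹ᵀᵀ * A * U⁻¹ᵀ = (U⁻¹ * U) * D * (Uᵀ * Uᵀ⁻¹) := by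
        rw [transpose_transpose, hA, transpose_nonsing_inv]; simp only [Matrix.mul_assoc]
    _ = D := by
        rw [nonsing_inv_mul _ hUdet, mul_nonsing_inv _ hUtdet, Matrix.one_mul, Matrix.mul_one]

section Superdiagonal

variable {R : Type*} [CommRing R] {n : ℕ}

def superdiagonal (s : ℕ → R) (n : ℕ) : Matrix (Fin n) (Fin n) R :=
  of fun i j => if j.1 = i.1 + 1 then s j else 0

theorem isUnit_one_add_superdiagonal (s : ℕ → R) : IsUnit (1 + superdiagonal s n) := by
  rw [isUnit_iff_isUnit_det, det_of_isUpperTriangular]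
  · simp [superdiagonal]
  · intro i j hji
    change j < i at hji
    have hji' : j.1 ≠ i.1 + 1 := by omega
    simp [superdiagonal, one_apply, hji.ne', hji']

theorem superdiagonal_mul_diagonal_mul_transpose (s w : ℕ → R) :
    superdiagonal s n * diagonal (fun k : Fin n => w k) * (superdiagonal s n)ᵀ =
      diagonal (fun i : Fin n => if i.1 + 1 < n then s (i + 1) ^ 2 * w (i + 1) else 0) := by
  ext i j
  rw [mul_apply]
  simp only [mul_diagonal, transpose_apply, superdiagonal, of_apply, diagonal_apply]
  rw [Fin.sum_univ_eq_sum_range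
    (fun k => (if k = i.1 + 1 then s k else 0) * w k * (if k = j.1 + 1 then s k else 0))]
  rcases eq_or_ne i j with rfl | hij
  · simp only [ite_mul, zero_mul, mul_ite, mul_zero, sum_ite_eq', mem_range, if_true]
    split_ifs <;> ring
  · simp [ite_mul, Fin.val_inj, hij, hij.symm]

end Superdiagonal

theorem tailVal_of_le {d : ℕ → ℝ} {n i : ℕ} (h : n ≤ i) : tailVal d n i = d n := by
  rw [tailVal, dif_pos h]

theorem tailVal_of_lt {d : ℕ → ℝ} {n i : ℕ} (h : i < n) :
    tailVal d n i = d i - 1 / tailVal d n (i + 1) := by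
  rw [tailVal, dif_neg h.not_ge]

theorem chainMatrix_eq_mul_diagonal_mul_transpose {d : ℕ → ℝ} {n : ℕ}
    (ht : ∀ i, 2 ≤ i → i ≤ n → tailVal d n i ≠ 0) :
    chainMatrix d n =
      (1 + superdiagonal (fun k => (tailVal d n (k + 1))⁻¹) n) *
        diagonal (fun k : Fin n => tailVal d n (k + 1)) *
        (1 + superdiagonal (fun k => (tailVal d n (k + 1))⁻¹) n)ᵀ := by
  set N := superdiagonal (fun k => (tailVal d n (k + 1))⁻¹) n
  set D := diagonal (fun k : Fin n => tailVal d n (k + 1))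
  have expand : (1 + N) * D * (1 + N)ᵀ = D + N * D + (N * D)ᵀ + N * D * Nᵀ := by
    simp only [transpose_add, transpose_one, add_mul, mul_add, Matrix.one_mul, Matrix.mul_one,
      transpose_mul, D, diagonal_transpose]
    abel
  rw [expand, show N * D * Nᵀ = _ from
    superdiagonal_mul_diagonal_mul_transpose _ (fun k => tailVal d n (k + 1))]
  ext i j
  simp only [Matrix.add_apply, D, mul_diagonal, transpose_apply, diagonal_apply, N, superdiagonal,
    of_apply, chainMatrix]
  rcases eq_or_ne i j with rfl | hne
  · simp only [if_true, Nat.ne_add_one, if_false, zero_mul, add_zero]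
    rcases lt_or_ge (i.1 + 1) n with h | h
    · have := ht (i + 1 + 1) (by omega) h
      rw [if_pos h, tailVal_of_lt h, sq, mul_assoc, inv_mul_cancel₀ this, mul_one, one_div,
        sub_add_cancel]
    · rw [if_neg h.not_gt, tailVal_of_le h, add_zero]
      congr 1
      omega
  simp only [hne, if_false, zero_add, add_zero, ite_mul, zero_mul]
  by_cases hj : j.1 = i.1 + 1
  · have := ht (j + 1) (by omega) j.2
    rw [if_pos (.inl hj.symm), if_pos hj, if_neg (by omega), inv_mul_cancel₀ this, add_zero]
  by_cases hi : i.1 = j.1 + 1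
  · have := ht (i + 1) (by omega) i.2
    rw [if_pos (.inr hi.symm), if_pos hi, if_neg hj, inv_mul_cancel₀ this, zero_add]
  rw [if_neg (by omega), if_neg hj, if_neg hi, add_zero]

/-- if all tail values `t 1, …, t n` are nonzero, the chain
matrix `A(d 1, …, d n)` is congruent over ℝ to `diag(t 1, …, t n)`. -/
theorem stmt7 (n : ℕ) (d : ℕ → ℝ)
    (ht : ∀ i, 1 ≤ i → i ≤ n → tailVal d n i ≠ 0) :
    ∃ P : Matrix (Fin n) (Fin n) ℝ, IsUnit P ∧
      P.transpose * chainMatrix d n * P =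
        Matrix.diagonal (fun i : Fin n => tailVal d n (i.1 + 1)) :=
  exists_isUnit_transpose_mul_mul_eq_of_eq_mul_mul_transpose (isUnit_one_add_superdiagonal _)
    (chainMatrix_eq_mul_diagonal_mul_transpose fun i hi hin => ht i (by omega) hin)
end

section
/- Let d_1, …, d_n be real numbers such that all the tail values t_1, …, t_n are defined and nonzero. Then the chain matrix A(d_1,…,d_n) is nonsingular and its signature equals Σ_{i=1}^n sgn(t_i). -/
/-- The signature of a real symmetric matrix: the number of positive
eigenvalues minus the number of negative eigenvalues, with multiplicity. -/
noncomputable def matSignature {n : ℕ} (A : Matrix (Fin n) (Fin n) ℝ)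
    (hA : A.IsHermitian) : ℤ :=
  ((Finset.univ.filter fun i => 0 < hA.eigenvalues i).card : ℤ) -
  ((Finset.univ.filter fun i => hA.eigenvalues i < 0).card : ℤ)

/-- `sgn x` is `1`, `-1`, `0` according as `x > 0`, `x < 0`, `x = 0`. -/
noncomputable def sgnR (x : ℝ) : ℤ :=
  if 0 < x then 1 else if x < 0 then -1 else 0

/-!
Eliminating from the last row, the chain matrix factors as `A = Lᵀ D L` with `L` unit lower
bidiagonal and `D = diag (t₁, …, tₙ)`: the pivots obey exactly the recursion
`tᵢ = dᵢ - 1 / tᵢ₊₁`, i.e. `dᵢ = tᵢ + 1 / tᵢ₊₁`. Hence `det A = ∏ tᵢ ≠ 0`, and by Sylvester's law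
of inertia `A` has as many positive (negative) eigenvalues as there are positive (negative) `tᵢ`.
-/

open Finset Matrix Module

section Inertia

variable {ι κ : Type*} [Fintype ι] [Fintype κ]

lemma sum_mul_sq_eq_dotProduct_diagonal_mulVec [DecidableEq ι] (w y : ι → ℝ) :
    ∑ i, w i * y i ^ 2 = y ⬝ᵥ (diagonal w *ᵥ y) := by
  simp only [dotProduct, mulVec_diagonal]
  exact sum_congr rfl fun i _ => by ring

lemma sum_mul_sq_eq_of_diagonal_eq [DecidableEq ι] [DecidableEq κ] (u : ι → ℝ) (t : κ → ℝ)
    (R : Matrix κ ι ℝ) (h : diagonal u = Rᵀ * diagonal t * R) (x : ι → ℝ) :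
    ∑ i, u i * x i ^ 2 = ∑ j, t j * (R *ᵥ x) j ^ 2 := by
  rw [sum_mul_sq_eq_dotProduct_diagonal_mulVec, sum_mul_sq_eq_dotProduct_diagonal_mulVec, h,
    ← mulVec_mulVec, ← mulVec_mulVec, dotProduct_mulVec, vecMul_transpose]

/-- Sylvester's dimension count: if there were fewer conditions `x i = 0` (for `u i ≤ 0`) and
`(R x) j = 0` (for `t j > 0`) than coordinates, some `x ≠ 0` would satisfy all of them, making
the left side of `h` positive and the right side nonpositive. -/
lemma card_pos_le_of_sum_mul_sq_eq (u : ι → ℝ) (t : κ → ℝ) (R : Matrix κ ι ℝ)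
    (h : ∀ x, ∑ i, u i * x i ^ 2 = ∑ j, t j * (R *ᵥ x) j ^ 2) :
    #{i | 0 < u i} ≤ #{j | 0 < t j} := by
  classical
  by_contra! hlt
  let Φ : (ι → ℝ) →ₗ[ℝ] ({i // ¬0 < u i} → ℝ) × ({j // 0 < t j} → ℝ) :=
    (LinearMap.funLeft ℝ ℝ Subtype.val).prod (LinearMap.funLeft ℝ ℝ Subtype.val ∘ₗ R.mulVecLin)
  have hdim : finrank ℝ (({i // ¬0 < u i} → ℝ) × ({j // 0 < t j} → ℝ)) < finrank ℝ (ι → ℝ) := by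
    have := card_filter_add_card_filter_not (s := univ) fun i => 0 < u i
    simp only [finrank_prod, finrank_fintype_fun_eq_card, Fintype.card_subtype, card_univ] at this ⊢
    omega
  obtain ⟨x, hx, hx0⟩ :=
    Submodule.exists_mem_ne_zero_of_ne_bot (LinearMap.ker_ne_bot_of_finrank_lt hdim)
  have hΦx : Φ x = 0 := hx
  have hxu : ∀ i, ¬0 < u i → x i = 0 := fun i hi =>
    congr_fun (congr_arg Prod.fst hΦx) ⟨i, hi⟩
  have hxt : ∀ j, 0 < t j → (R *ᵥ x) j = 0 := fun j hj =>
    congr_fun (congr_arg Prod.snd hΦx) ⟨j, hj⟩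
  have hpos : 0 < ∑ i, u i * x i ^ 2 := by
    obtain ⟨i₀, hi₀⟩ : ∃ i, x i ≠ 0 := Function.ne_iff.mp hx0
    refine sum_pos' (fun i _ => ?_) ⟨i₀, mem_univ _, ?_⟩
    · by_cases hi : 0 < u i
      · positivity
      · simp [hxu i hi]
    · have hu : 0 < u i₀ := by_contra fun hu => hi₀ (hxu i₀ hu)
      positivity
  have hnonpos : ∑ j, t j * (R *ᵥ x) j ^ 2 ≤ 0 := by
    refine sum_nonpos fun j _ => ?_
    by_cases hj : 0 < t j
    · simp [hxt j hj]
    · exact mul_nonpos_of_nonpos_of_nonneg (not_lt.mp hj) (sq_nonneg _)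
  linarith [h x]

variable [DecidableEq ι]

theorem card_pos_eq_of_diagonal_eq (u t : ι → ℝ) {R : Matrix ι ι ℝ} (hR : IsUnit R)
    (h : diagonal u = Rᵀ * diagonal t * R) :
    #{i | 0 < u i} = #{i | 0 < t i} := by
  have h' : diagonal t = (R⁻¹)ᵀ * diagonal u * R⁻¹ := by
    have hdet : IsUnit R.det := (isUnit_iff_isUnit_det R).mp hR
    rw [h, transpose_nonsing_inv, Matrix.mul_assoc, Matrix.mul_assoc, mul_nonsing_inv _ hdet,
      Matrix.mul_one, ← Matrix.mul_assoc, nonsing_inv_mul _ (by rwa [det_transpose]),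
      Matrix.one_mul]
  exact le_antisymm (card_pos_le_of_sum_mul_sq_eq u t R (sum_mul_sq_eq_of_diagonal_eq u t R h))
    (card_pos_le_of_sum_mul_sq_eq t u R⁻¹ (sum_mul_sq_eq_of_diagonal_eq t u R⁻¹ h'))

theorem card_neg_eq_of_diagonal_eq (u t : ι → ℝ) {R : Matrix ι ι ℝ} (hR : IsUnit R)
    (h : diagonal u = Rᵀ * diagonal t * R) :
    #{i | u i < 0} = #{i | t i < 0} := by
  have h' : diagonal (fun i => -u i) = Rᵀ * diagonal (fun i => -t i) * R := by
    rw [← diagonal_neg, ← diagonal_neg, h, Matrix.mul_neg, Matrix.neg_mul]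
  simpa using card_pos_eq_of_diagonal_eq _ _ hR h'

end Inertia

theorem matSignature_eq_of_eq_transpose_mul_diagonal_mul {n : ℕ} {A : Matrix (Fin n) (Fin n) ℝ}
    (hA : A.IsHermitian) (t : Fin n → ℝ) {R : Matrix (Fin n) (Fin n) ℝ} (hR : IsUnit R)
    (h : A = Rᵀ * diagonal t * R) :
    matSignature A hA = (#{i | 0 < t i} : ℤ) - #{i | t i < 0} := by
  set V : Matrix (Fin n) (Fin n) ℝ := ↑hA.eigenvectorUnitary
  have hV : IsUnit V := Unitary.isUnit_coe
  have hdiag : diagonal hA.eigenvalues = (R * V)ᵀ * diagonal t * (R * V) := by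
    have hspec : star V * A * V = diagonal hA.eigenvalues :=
      (Unitary.conjStarAlgAut_star_apply _ _).symm.trans hA.conjStarAlgAut_star_eigenvectorUnitary
    rw [← hspec, h, transpose_mul, star_eq_conjTranspose, conjTranspose_eq_transpose_of_trivial]
    simp only [Matrix.mul_assoc]
  rw [matSignature, card_pos_eq_of_diagonal_eq _ t (hR.mul hV) hdiag,
    card_neg_eq_of_diagonal_eq _ t (hR.mul hV) hdiag]

lemma sum_sgnR_eq_card_pos_sub_card_neg {ι : Type*} [Fintype ι] (t : ι → ℝ) :
    ∑ i, sgnR (t i) = (#{i | 0 < t i} : ℤ) - #{i | t i < 0} := by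
  have hsgn : ∀ x : ℝ, sgnR x = (if 0 < x then 1 else 0) - if x < 0 then 1 else 0 := by
    intro x
    unfold sgnR
    split_ifs <;> first | rfl | linarith
  simp only [hsgn, sum_sub_distrib, sum_boole]

noncomputable def unitLowerBidiagonal (s : ℕ → ℝ) (n : ℕ) : Matrix (Fin n) (Fin n) ℝ :=
  of fun i j => if i = j then 1 else if i.1 = j.1 + 1 then (s i)⁻¹ else 0

lemma det_unitLowerBidiagonal (s : ℕ → ℝ) (n : ℕ) : (unitLowerBidiagonal s n).det = 1 := by
  rw [det_of_isLowerTriangular]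
  · simp [unitLowerBidiagonal]
  · intro i j hij
    simp only [unitLowerBidiagonal, of_apply]
    have hij : i.1 < j.1 := hij
    rw [if_neg (Fin.ne_of_val_ne hij.ne), if_neg (by omega)]

lemma sum_unitLowerBidiagonal_mul {n : ℕ} (s : ℕ → ℝ) (i : Fin n) (f : ℕ → ℝ) :
    ∑ k, unitLowerBidiagonal s n k i * f k =
      f i + if i.1 + 1 < n then (s (i + 1))⁻¹ * f (i + 1) else 0 := by
  have hcol : ∀ k : Fin n, unitLowerBidiagonal s n k i * f k =
      (if k.1 = i then f i else 0) + if k.1 = i + 1 then (s (i + 1))⁻¹ * f (i + 1) else 0 := by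
    intro k
    simp only [unitLowerBidiagonal, of_apply, Fin.ext_iff]
    split_ifs <;> first | omega | simp_all
  simp only [hcol, sum_add_distrib]
  rw [Fin.sum_univ_eq_sum_range (fun k => if k = i.1 then f i else 0),
    Fin.sum_univ_eq_sum_range (fun k => if k = i.1 + 1 then (s (i + 1))⁻¹ * f (i + 1) else 0),
    sum_ite_eq', sum_ite_eq', if_pos (mem_range.2 i.2)]
  simp only [mem_range]

theorem chainMatrix_eq_transpose_mul_diagonal_mul {n : ℕ} (d s : ℕ → ℝ)
    (hs : ∀ k < n, s k ≠ 0)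
    (hd : ∀ k < n, d (k + 1) = s k + if k + 1 < n then (s (k + 1))⁻¹ else 0) :
    chainMatrix d n =
      (unitLowerBidiagonal s n)ᵀ * diagonal (fun i : Fin n => s i) * unitLowerBidiagonal s n := by
  ext i j
  rw [Matrix.mul_assoc, mul_apply]
  simp only [transpose_apply, diagonal_mul]
  have hcol := sum_unitLowerBidiagonal_mul s i
    (fun k => s k * if k = j.1 then 1 else if k = j.1 + 1 then (s k)⁻¹ else 0)
  simp only [unitLowerBidiagonal, of_apply, Fin.ext_iff] at hcol ⊢
  rw [hcol, chainMatrix, of_apply, hd i i.2]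
  simp only [Fin.ext_iff]
  have hsi := hs i i.2
  by_cases hi : i.1 + 1 < n
  · simp only [if_pos hi, inv_mul_cancel_left₀ (hs _ hi)]
    split_ifs <;> first | omega | simp [hsi]
  · simp only [if_neg hi]
    split_ifs <;> first | omega | simp [hsi]

lemma eq_tailVal_add_inv_tailVal_succ (d : ℕ → ℝ) {n k : ℕ} (hk : k < n) :
    d (k + 1) = tailVal d n (k + 1) + if k + 1 < n then (tailVal d n (k + 1 + 1))⁻¹ else 0 := by
  by_cases h : k + 1 < n
  · rw [if_pos h, tailVal, dif_neg (by omega), one_div, sub_add_cancel]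
  · rw [if_neg h, add_zero, show k + 1 = n by omega, tailVal, dif_pos le_rfl]

/-- if all tail values `t 1, …, t n` are nonzero, the chain
matrix `A(d 1, …, d n)` is nonsingular and its signature is `∑ sgn (t i)`. -/
theorem stmt8 (n : ℕ) (d : ℕ → ℝ)
    (ht : ∀ i, 1 ≤ i → i ≤ n → tailVal d n i ≠ 0)
    (hA : (chainMatrix d n).IsHermitian) :
    (chainMatrix d n).det ≠ 0 ∧
    matSignature (chainMatrix d n) hA =
      ∑ i ∈ Finset.range n, sgnR (tailVal d n (i + 1)) := by
  set s : ℕ → ℝ := fun k => tailVal d n (k + 1)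
  have hs : ∀ k < n, s k ≠ 0 := fun k hk => ht (k + 1) (by omega) hk
  have hfac := chainMatrix_eq_transpose_mul_diagonal_mul d s hs
    fun k hk => eq_tailVal_add_inv_tailVal_succ d hk
  have hL : IsUnit (unitLowerBidiagonal s n) := by
    rw [isUnit_iff_isUnit_det, det_unitLowerBidiagonal]
    exact isUnit_one
  constructor
  · rw [hfac, det_mul, det_mul, det_transpose, det_unitLowerBidiagonal, det_diagonal]
    simpa using prod_ne_zero_iff.mpr fun (i : Fin n) _ => hs i i.2
  · rw [matSignature_eq_of_eq_transpose_mul_diagonal_mul hA _ hL hfac,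
      ← sum_sgnR_eq_card_pos_sub_card_neg, ← Fin.sum_univ_eq_sum_range (fun k => sgnR (s k))]
end

section
/- Let α_1, …, α_n be integers with |α_i| ≥ 2 for all i. Then the chain matrix A(α_1,…,α_n) (viewed over ℝ) is nonsingular and its signature equals Σ_{i=1}^n sgn(α_i). -/
open Matrix Finset QuadraticMap

section Inertia

variable {ι : Type*} [Fintype ι]

theorem card_pos_sub_card_neg_eq_sum_sign {α : Type*} [Zero α] [LinearOrder α] (w : ι → α) :
    (#{i | 0 < w i} : ℤ) - #{i | w i < 0} = ∑ i, (SignType.sign (w i) : ℤ) := by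
  simp only [card_filter, Nat.cast_sum, ← sum_sub_distrib]
  refine sum_congr rfl fun i _ => ?_
  rcases lt_trichotomy (w i) 0 with h | h | h
  · simp [h, not_lt.mpr h.le]
  · simp [h]
  · simp [h, not_lt.mpr h.le]

variable {𝕜 : Type*} [DecidableEq ι]

theorem weightedSumSquares_apply_eq_dotProduct [CommRing 𝕜] (w x : ι → 𝕜) :
    weightedSumSquares 𝕜 w x = x ⬝ᵥ diagonal w *ᵥ x := by
  simp [weightedSumSquares_apply, dotProduct, mulVec_diagonal, mul_left_comm]

theorem weightedSumSquares_equivalent_of_transpose_mul_diagonal_mul [CommRing 𝕜]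
    {d e : ι → 𝕜} {P : Matrix ι ι 𝕜} (hP : IsUnit P) (h : Pᵀ * diagonal d * P = diagonal e) :
    (weightedSumSquares 𝕜 e).Equivalent (weightedSumSquares 𝕜 d) := by
  let := hP.invertible
  refine ⟨{ toLinearEquiv := P.toLinearEquiv' this, map_app' := fun x => ?_ }⟩
  change weightedSumSquares 𝕜 d (P *ᵥ x) = weightedSumSquares 𝕜 e x
  rw [weightedSumSquares_apply_eq_dotProduct, weightedSumSquares_apply_eq_dotProduct, ← h,
    ← mulVec_mulVec, ← mulVec_mulVec, dotProduct_mulVec x, vecMul_transpose]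

theorem card_pos_eq_and_card_neg_eq_of_transpose_mul_diagonal_mul
    [Field 𝕜] [LinearOrder 𝕜] [IsStrictOrderedRing 𝕜]
    {d e : ι → 𝕜} {P : Matrix ι ι 𝕜} (hP : IsUnit P) (h : Pᵀ * diagonal d * P = diagonal e) :
    #{i | 0 < e i} = #{i | 0 < d i} ∧ #{i | e i < 0} = #{i | d i < 0} := by
  have hQ := weightedSumSquares_equivalent_of_transpose_mul_diagonal_mul hP h
  have hpos := QuadraticForm.sigPos_weightedSumSquares.symm.trans
    (QuadraticForm.sigPos_of_equiv_weightedSumSquares hQ)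
  have hneg := QuadraticForm.sigNeg_weightedSumSquares.symm.trans
    (QuadraticForm.sigNeg_of_equiv_weightedSumSquares hQ)
  simp only [Set.ncard_eq_toFinset_card', Set.toFinset_ofPred] at hpos hneg
  exact ⟨hpos, hneg⟩

end Inertia

theorem matSignature_eq_of_eq_mul_diagonal_mul_transpose {n : ℕ}
    {A L : Matrix (Fin n) (Fin n) ℝ} (hA : A.IsHermitian) (hL : IsUnit L) {d : Fin n → ℝ}
    (h : A = L * diagonal d * Lᵀ) :
    matSignature A hA = ∑ i, (SignType.sign (d i) : ℤ) := by
  set U : Matrix (Fin n) (Fin n) ℝ := ↑hA.eigenvectorUnitary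
  have hspec : Uᵀ * A * U = diagonal hA.eigenvalues := by
    simpa [Unitary.conjStarAlgAut_star_apply, star_eq_conjTranspose,
      RCLike.ofReal_real_eq_id] using hA.conjStarAlgAut_star_eigenvectorUnitary
  have hcongr : (Lᵀ * U)ᵀ * diagonal d * (Lᵀ * U) = diagonal hA.eigenvalues := by
    rw [← hspec, h]
    simp only [transpose_mul, transpose_transpose, Matrix.mul_assoc]
  obtain ⟨hpos, hneg⟩ := card_pos_eq_and_card_neg_eq_of_transpose_mul_diagonal_mul
    (((isUnit_transpose L).mpr hL).mul Unitary.isUnit_coe) hcongr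
  rw [← card_pos_sub_card_neg_eq_sum_sign, ← hpos, ← hneg]
  rfl

/-- `chainPivot d k` is the `k`-th pivot `δₖ` of `chainMatrix d n` (for `1 ≤ k ≤ n`). Starting
from `δ₀ = 0` makes `δ₁ = d 1` an instance of the recursion, because `0⁻¹ = 0` in Lean. -/
noncomputable def chainPivot (d : ℕ → ℝ) : ℕ → ℝ
  | 0 => 0
  | k + 1 => d (k + 1) - (chainPivot d k)⁻¹

theorem one_le_abs_sub_and_sign_sub_eq {x t : ℝ} (hx : 2 ≤ |x|) (ht : |t| ≤ 1) :
    1 ≤ |x - t| ∧ SignType.sign (x - t) = SignType.sign x := by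
  have := abs_le.mp ht
  rcases le_abs'.mp hx with hx | hx
  · rw [abs_of_neg (by linarith), sign_neg (by linarith), sign_neg (by linarith)]
    exact ⟨by linarith, rfl⟩
  · rw [abs_of_pos (by linarith), sign_pos (by linarith), sign_pos (by linarith)]
    exact ⟨by linarith, rfl⟩

theorem abs_inv_chainPivot_le_one {d : ℕ → ℝ} {k : ℕ}
    (hd : ∀ i, 1 ≤ i → i ≤ k → 2 ≤ |d i|) : |(chainPivot d k)⁻¹| ≤ 1 := by
  induction k with
  | zero => simp [chainPivot]
  | succ k ih =>
    have h := (one_le_abs_sub_and_sign_sub_eq (hd (k + 1) k.succ_pos le_rfl)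
      (ih fun i hi hik => hd i hi (by omega))).1
    rw [chainPivot, abs_inv]
    exact inv_le_one_of_one_le₀ h

theorem sign_chainPivot_succ {d : ℕ → ℝ} {k : ℕ} (hd : ∀ i, 1 ≤ i → i ≤ k + 1 → 2 ≤ |d i|) :
    SignType.sign (chainPivot d (k + 1)) = SignType.sign (d (k + 1)) :=
  (one_le_abs_sub_and_sign_sub_eq (hd (k + 1) k.succ_pos le_rfl)
    (abs_inv_chainPivot_le_one fun i hi hik => hd i hi (by omega))).2

noncomputable def chainFactor (d : ℕ → ℝ) (n : ℕ) : Matrix (Fin n) (Fin n) ℝ :=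
  of fun i j => if i = j then 1 else if j.1 + 1 = i.1 then (chainPivot d i)⁻¹ else 0

theorem det_chainFactor (d : ℕ → ℝ) (n : ℕ) : (chainFactor d n).det = 1 := by
  rw [det_of_isLowerTriangular _ fun i j (hij : i < j) => ?_]
  · simp [chainFactor]
  · simp [chainFactor, hij.ne, show ¬ j.1 + 1 = i.1 by omega]

theorem sum_range_bidiagonal_mul {n i : ℕ} (hi : i < n) (a b : ℝ) (f : ℕ → ℝ) :
    ∑ k ∈ range n, (if k = i then a else if k + 1 = i then b else 0) * f k =
      a * f i + if i = 0 then 0 else b * f (i - 1) := by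
  have hsplit : ∀ k, (if k = i then a else if k + 1 = i then b else 0) * f k =
      (if k = i then a * f i else 0) +
        if k = i - 1 then (if i = 0 then 0 else b * f (i - 1)) else 0 := by
    intro k
    split_ifs <;> first | omega | simp_all
  rw [sum_congr rfl fun k _ => hsplit k, sum_add_distrib, sum_ite_eq', sum_ite_eq',
    if_pos (mem_range.mpr hi), if_pos (mem_range.mpr (by omega))]

theorem chainFactor_mul_diagonal {d : ℕ → ℝ} {n : ℕ}
    (hd : ∀ k, k + 1 < n → chainPivot d (k + 1) ≠ 0) :
    chainFactor d n * diagonal (fun i : Fin n => chainPivot d (i + 1)) =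
      of fun (i k : Fin n) =>
        if k.1 = i.1 then chainPivot d (i + 1) else if k.1 + 1 = i.1 then 1 else 0 := by
  ext ⟨i, hi⟩ ⟨k, hk⟩
  rw [mul_diagonal]
  simp only [chainFactor, of_apply, Fin.ext_iff]
  obtain rfl | rfl | hik : k = i ∨ k + 1 = i ∨ (k ≠ i ∧ k + 1 ≠ i) := by omega
  · simp
  · simp [inv_mul_cancel₀ (hd k hi)]
  · simp [hik, Ne.symm hik.1]

theorem chainMatrix_eq_chainFactor_mul_diagonal_mul_transpose {d : ℕ → ℝ} {n : ℕ}
    (hd : ∀ k, k + 1 < n → chainPivot d (k + 1) ≠ 0) :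
    chainMatrix d n =
      chainFactor d n * diagonal (fun i : Fin n => chainPivot d (i + 1)) * (chainFactor d n)ᵀ := by
  rw [chainFactor_mul_diagonal hd]
  ext ⟨i, hi⟩ ⟨j, hj⟩
  rw [mul_apply]
  simp only [of_apply, transpose_apply, chainFactor, chainMatrix, Fin.ext_iff]
  rw [Fin.sum_univ_eq_sum_range (fun k =>
      (if k = i then chainPivot d (i + 1) else if k + 1 = i then 1 else 0) *
        (if j = k then 1 else if k + 1 = j then (chainPivot d j)⁻¹ else 0)),
    sum_range_bidiagonal_mul hi]
  obtain rfl | rfl | rfl | hij :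
      j = i ∨ j = i + 1 ∨ i = j + 1 ∨ (j ≠ i ∧ j ≠ i + 1 ∧ i ≠ j + 1) := by omega
  · cases j <;> simp [chainPivot]
  · simp [mul_inv_cancel₀ (hd i hj)]
    intro
    rw [if_neg (by omega), if_neg (by omega)]
  · simp [show j + 1 + 1 ≠ j by omega]
  · split_ifs <;> first | omega | simp

/-- if `α 1, …, α n` are integers with `|α i| ≥ 2`, the chain
matrix `A(α 1, …, α n)` over ℝ is nonsingular and its signature is
`∑ sgn (α i)`. -/
theorem stmt9 (n : ℕ) (α : ℕ → ℤ)
    (hα : ∀ i, 1 ≤ i → i ≤ n → 2 ≤ |α i|)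
    (hA : (chainMatrix (fun j => (α j : ℝ)) n).IsHermitian) :
    (chainMatrix (fun j => (α j : ℝ)) n).det ≠ 0 ∧
    matSignature (chainMatrix (fun j => (α j : ℝ)) n) hA =
      ∑ i ∈ Finset.range n, Int.sign (α (i + 1)) := by
  set a : ℕ → ℝ := fun j => (α j : ℝ)
  have ha : ∀ i, 1 ≤ i → i ≤ n → 2 ≤ |a i| := fun i h1 h2 => by
    simpa [a, ← Int.cast_abs] using (Int.cast_le (R := ℝ)).mpr (hα i h1 h2)
  have hsign : ∀ k < n, SignType.sign (chainPivot a (k + 1)) = SignType.sign (α (k + 1)) :=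
    fun k hk => by rw [sign_chainPivot_succ fun i h1 h2 => ha i h1 (by omega), sign_intCast]
  have hpivot : ∀ k < n, chainPivot a (k + 1) ≠ 0 := fun k hk => by
    rw [← sign_ne_zero, hsign k hk, sign_ne_zero]
    intro h0
    simpa [h0] using hα (k + 1) (by omega) hk
  have hfac := chainMatrix_eq_chainFactor_mul_diagonal_mul_transpose fun k hk =>
    hpivot k (Nat.lt_of_succ_lt hk)
  have hdet : (chainMatrix a n).det = ∏ i : Fin n, chainPivot a (i + 1) := by
    rw [hfac, det_mul, det_mul, det_transpose, det_chainFactor, det_diagonal, one_mul, mul_one]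
  refine ⟨hdet ▸ prod_ne_zero_iff.mpr fun i _ => hpivot i i.2, ?_⟩
  have hL : IsUnit (chainFactor a n) := by
    rw [isUnit_iff_isUnit_det, det_chainFactor]; exact isUnit_one
  rw [matSignature_eq_of_eq_mul_diagonal_mul_transpose hA hL hfac,
    ← Fin.sum_univ_eq_sum_range (fun i => Int.sign (α (i + 1)))]
  exact sum_congr rfl fun i _ => by rw [hsign i i.2, Int.sign_eq_sign]
end
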